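/- For integer m ≥ 1, sequences of nonnegative integers a_i and c_i with c_i ≤ a_i, and rationals x_i, four times the unrestricted sum over tuples (k_1,...,k_m) with 0 ≤ k_i ≤ a_i of [∏ C(a_i,k_i)C(k_i,c_i)] * (∑ x_i k_i^2) equals 2^{A_0-C_0} * [∏ C(a_i,c_i)] * (A_1 - C_1 + A_{1,2} + C_{1,2} + 2 S_{1,1}). -/

import Mathlib

open Finset

lemma B0 (n : ℕ) : ∑ j ∈ range (n+1), ((n.choose j : ℚ)) = 2 ^ n := by
  have h := congrArg (Nat.cast (R := ℚ)) (Nat.sum_range_choose n)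
  push_cast at h
  exact h

lemma B1 (n : ℕ) : 2 * ∑ j ∈ range (n+1), (n.choose j : ℚ) * j = n * 2 ^ n := by
  cases n with
  | zero => simp
  | succ n =>
    have e : ∑ j ∈ range (n+2), ((n+1).choose j : ℚ) * j
        = ∑ i ∈ range (n+1), ((n+1).choose (i+1) : ℚ) * (i+1) := by
      rw [Finset.sum_range_succ' (fun j => ((n+1).choose j : ℚ) * j)]
      simp
    rw [e]
    have h2 : ∀ i, ((n+1).choose (i+1) : ℚ) * ((i:ℚ)+1) = (n+1) * (n.choose i : ℚ) := by
      intro i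
      have h := congrArg (Nat.cast (R := ℚ)) (Nat.add_one_mul_choose_eq n i)
      push_cast at h
      linarith [h]
    rw [Finset.sum_congr rfl fun i _ => by push_cast; exact h2 i, ← Finset.mul_sum, B0]
    push_cast; ring

lemma B2 (n : ℕ) : 4 * ∑ j ∈ range (n+1), (n.choose j : ℚ) * j^2 = n * (n+1) * 2 ^ n := by
  cases n with
  | zero => simp
  | succ n =>
    have e : ∑ j ∈ range (n+2), ((n+1).choose j : ℚ) * j^2
        = ∑ i ∈ range (n+1), ((n+1).choose (i+1) : ℚ) * (i+1)^2 := by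
      rw [Finset.sum_range_succ' (fun j => ((n+1).choose j : ℚ) * j^2)]
      simp
    rw [e]
    have h2 : ∀ i, ((n+1).choose (i+1) : ℚ) * ((i:ℚ)+1)^2
        = (n+1) * ((n.choose i : ℚ) * i) + (n+1) * (n.choose i : ℚ) := by
      intro i
      have h := congrArg (Nat.cast (R := ℚ)) (Nat.add_one_mul_choose_eq n i)
      push_cast at h
      nlinarith [h]
    rw [Finset.sum_congr rfl fun i _ => by push_cast; exact h2 i, Finset.sum_add_distrib,
      ← Finset.mul_sum, ← Finset.mul_sum, B0]
    have h1 := B1 n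
    push_cast
    linear_combination (2*((n:ℚ)+1)) * h1

lemma keyP (a c : ℕ) (h : c ≤ a) (P : ℕ → ℚ) :
    ∑ k ∈ range (a+1), (a.choose k : ℚ) * (k.choose c : ℚ) * P k
      = (a.choose c : ℚ) * ∑ j ∈ range (a - c + 1), (((a-c).choose j : ℚ)) * P (c + j) := by
  have hsplit : ∑ k ∈ range (a+1), (a.choose k : ℚ) * (k.choose c : ℚ) * P k
      = ∑ k ∈ Finset.Ico c (a+1), (a.choose k : ℚ) * (k.choose c : ℚ) * P k := by
    rw [range_eq_Ico, ← Finset.sum_Ico_consecutive _ (Nat.zero_le c) (by omega)]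
    have hz : ∑ k ∈ Finset.Ico 0 c, (a.choose k : ℚ) * (k.choose c : ℚ) * P k = 0 := by
      apply Finset.sum_eq_zero
      intro k hk
      simp only [Finset.mem_Ico] at hk
      rw [Nat.choose_eq_zero_of_lt hk.2]
      simp
    rw [hz, zero_add]
  rw [hsplit, Finset.sum_Ico_eq_sum_range]
  have hlen : a + 1 - c = a - c + 1 := by omega
  rw [hlen, Finset.mul_sum]
  apply Finset.sum_congr rfl
  intro j hj
  simp only [Finset.mem_range] at hj
  have h1 : a.choose (c + j) * (c + j).choose c = a.choose c * (a - c).choose j := by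
    have := Nat.choose_mul (n := a) (k := c + j) (s := c) (Nat.le_add_right c j)
    simpa using this
  have h2 := congrArg (Nat.cast (R := ℚ)) h1
  push_cast at h2
  calc (a.choose (c+j) : ℚ) * ((c+j).choose c : ℚ) * P (c+j)
      = ((a.choose (c+j) : ℚ) * ((c+j).choose c : ℚ)) * P (c+j) := by ring
    _ = ((a.choose c : ℚ) * ((a-c).choose j : ℚ)) * P (c+j) := by rw [h2]
    _ = (a.choose c : ℚ) * (((a-c).choose j : ℚ) * P (c+j)) := by ring

lemma key0 (a c : ℕ) (h : c ≤ a) :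
    ∑ k ∈ range (a+1), (a.choose k : ℚ) * (k.choose c : ℚ)
      = 2 ^ (a - c) * (a.choose c : ℚ) := by
  have hh := keyP a c h (fun _ => 1)
  simp only [mul_one] at hh
  rw [hh, B0]; ring

lemma key2 (a c : ℕ) (h : c ≤ a) :
    4 * ∑ k ∈ range (a+1), (a.choose k : ℚ) * (k.choose c : ℚ) * (k : ℚ)^2
      = 2 ^ (a - c) * (a.choose c : ℚ)
        * ((a : ℚ) - c + (a:ℚ)^2 + (c:ℚ)^2 + 2 * (a:ℚ) * (c:ℚ)) := by
  rw [keyP a c h (fun k => (k : ℚ)^2)]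
  set n := a - c with hn
  have hcast : (n : ℚ) = (a : ℚ) - c := by
    have h0 : (n : ℕ) + c = a := by omega
    have h1 := congrArg (Nat.cast (R := ℚ)) h0
    push_cast at h1; linarith
  have hexp : ∑ j ∈ range (n+1), ((n.choose j : ℚ)) * ((c + j : ℕ) : ℚ)^2
      = (c:ℚ)^2 * ∑ j ∈ range (n+1), (n.choose j : ℚ)
        + 2 * (c:ℚ) * ∑ j ∈ range (n+1), (n.choose j : ℚ) * j
        + ∑ j ∈ range (n+1), (n.choose j : ℚ) * j^2 := by
    rw [Finset.mul_sum, Finset.mul_sum, ← Finset.sum_add_distrib, ← Finset.sum_add_distrib]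
    apply Finset.sum_congr rfl
    intro j _
    push_cast
    ring
  rw [hexp, B0]
  have h1 := B1 n
  have h2 := B2 n
  have hA : (a:ℚ) = (n:ℚ) + c := by linarith [hcast]
  rw [hA]
  linear_combination ((a.choose c : ℚ)) * ((4*(c:ℚ)) * h1 + h2)

set_option maxHeartbeats 1000000 in
theorem stmt17 (m : ℕ) (hm : 1 ≤ m) (a c : Fin m → ℕ) (hca : ∀ i, c i ≤ a i)
    (x : Fin m → ℚ) :
    4 * (∑ k ∈ Fintype.piFinset (fun i => Finset.range (a i + 1)), (∏ i, ((a i).choose (k i) : ℚ) * ((k i).choose (c i) : ℚ)) * (∑ i, x i * (k i : ℚ) ^ 2))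
      = (2 : ℚ) ^ ((∑ i, a i) - ∑ i, c i) * (∏ i, ((a i).choose (c i) : ℚ)) * ((∑ i, x i * (a i : ℚ)) - (∑ i, x i * (c i : ℚ)) + (∑ i, x i * (a i : ℚ) ^ 2) + (∑ i, x i * (c i : ℚ) ^ 2) + 2 * (∑ i, x i * (a i : ℚ) * (c i : ℚ))) := by
  classical
  set f : Fin m → ℕ → ℚ := fun i t => ((a i).choose t : ℚ) * (t.choose (c i) : ℚ) with hf
  set S0 : Fin m → ℚ := fun i => 2 ^ (a i - c i) * ((a i).choose (c i) : ℚ) with hS0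
  set Q : Fin m → ℚ := fun i =>
    (a i : ℚ) - c i + (a i:ℚ)^2 + (c i:ℚ)^2 + 2 * (a i:ℚ) * (c i:ℚ) with hQ
  have hS0f : ∀ j, ∑ t ∈ range (a j + 1), f j t = S0 j := fun j => key0 (a j) (c j) (hca j)
  have step1 : ∑ k ∈ Fintype.piFinset (fun i => Finset.range (a i + 1)),
      (∏ i, f i (k i)) * (∑ i, x i * (k i : ℚ) ^ 2)
      = ∑ i, x i * ∑ k ∈ Fintype.piFinset (fun i => Finset.range (a i + 1)),
          (∏ j, f j (k j)) * (k i : ℚ)^2 := by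
    simp_rw [Finset.mul_sum]
    rw [Finset.sum_comm]
    apply Finset.sum_congr rfl
    intro i _
    apply Finset.sum_congr rfl
    intro k _
    ring
  have step2 : ∀ i : Fin m,
      ∑ k ∈ Fintype.piFinset (fun i => Finset.range (a i + 1)),
          (∏ j, f j (k j)) * (k i : ℚ)^2
      = (∑ t ∈ range (a i + 1), f i t * (t:ℚ)^2) * ∏ j ∈ univ.erase i, S0 j := by
    intro i
    have hmerge : ∀ k : Fin m → ℕ,
        (∏ j, (f j (k j) * (if j = i then ((k j : ℚ))^2 else 1)))
        = (∏ j, f j (k j)) * (k i : ℚ)^2 := by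
      intro k
      calc ∏ j, (f j (k j) * (if j = i then ((k j : ℚ))^2 else 1))
          = (∏ j, f j (k j)) * ∏ j, (if j = i then ((k j : ℚ))^2 else 1) :=
            Finset.prod_mul_distrib
        _ = (∏ j, f j (k j)) * (k i : ℚ)^2 := by congr 1; simp
    calc ∑ k ∈ Fintype.piFinset (fun i => Finset.range (a i + 1)),
          (∏ j, f j (k j)) * (k i : ℚ)^2
        = ∑ k ∈ Fintype.piFinset (fun i => Finset.range (a i + 1)),
            ∏ j, (f j (k j) * (if j = i then ((k j : ℚ))^2 else 1)) :=
          Finset.sum_congr rfl fun k _ => (hmerge k).symm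
      _ = ∏ j, ∑ t ∈ range (a j + 1), (f j t * (if j = i then ((t : ℚ))^2 else 1)) :=
          (Finset.prod_univ_sum (fun j => Finset.range (a j + 1))
            (fun j t => f j t * (if j = i then ((t : ℚ))^2 else 1))).symm
      _ = (∑ t ∈ range (a i + 1), (f i t * (if i = i then ((t : ℚ))^2 else 1)))
            * ∏ j ∈ univ.erase i, ∑ t ∈ range (a j + 1), (f j t * (if j = i then ((t : ℚ))^2 else 1)) :=
          (Finset.mul_prod_erase univ
            (fun j => ∑ t ∈ range (a j + 1), (f j t * (if j = i then ((t : ℚ))^2 else 1)))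
            (Finset.mem_univ i)).symm
      _ = (∑ t ∈ range (a i + 1), f i t * (t:ℚ)^2) * ∏ j ∈ univ.erase i, S0 j := by
          congr 1
          · simp
          · apply Finset.prod_congr rfl
            intro j hj
            have hji : j ≠ i := (Finset.mem_erase.mp hj).1
            rw [← hS0f j]
            apply Finset.sum_congr rfl
            intro t _
            simp [hji]
  have step3 : ∀ i : Fin m,
      4 * ((∑ t ∈ range (a i + 1), f i t * (t:ℚ)^2) * ∏ j ∈ univ.erase i, S0 j)
      = Q i * ∏ j, S0 j := by
    intro i
    have h2 := key2 (a i) (c i) (hca i)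
    calc 4 * ((∑ t ∈ range (a i + 1), f i t * (t:ℚ)^2) * ∏ j ∈ univ.erase i, S0 j)
        = (4 * ∑ t ∈ range (a i + 1), f i t * (t:ℚ)^2) * ∏ j ∈ univ.erase i, S0 j := by ring
      _ = (S0 i * Q i) * ∏ j ∈ univ.erase i, S0 j := by rw [h2]
      _ = Q i * (S0 i * ∏ j ∈ univ.erase i, S0 j) := by ring
      _ = Q i * ∏ j, S0 j := by rw [Finset.mul_prod_erase univ S0 (Finset.mem_univ i)]
  have hP : ∏ j, S0 j
      = (2:ℚ) ^ ((∑ i, a i) - ∑ i, c i) * ∏ i, ((a i).choose (c i) : ℚ) := by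
    rw [hS0]
    rw [Finset.prod_mul_distrib]
    congr 1
    rw [Finset.prod_pow_eq_pow_sum]
    congr 1
    rw [Finset.sum_tsub_distrib _ (fun i _ => hca i)]
  rw [step1, Finset.mul_sum]
  have lhs_eq : ∑ i, 4 * (x i * ∑ k ∈ Fintype.piFinset (fun i => Finset.range (a i + 1)),
      (∏ j, f j (k j)) * (k i : ℚ)^2)
      = ∑ i, x i * Q i * ((2:ℚ) ^ ((∑ i, a i) - ∑ i, c i) * ∏ i, ((a i).choose (c i) : ℚ)) := by
    apply Finset.sum_congr rfl
    intro i _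
    rw [step2 i]
    have h3 := step3 i
    rw [← hP]
    calc 4 * (x i * ((∑ t ∈ range (a i + 1), f i t * (t:ℚ)^2) * ∏ j ∈ univ.erase i, S0 j))
        = x i * (4 * ((∑ t ∈ range (a i + 1), f i t * (t:ℚ)^2) * ∏ j ∈ univ.erase i, S0 j)) := by
          ring
      _ = x i * (Q i * ∏ j, S0 j) := by rw [h3]
      _ = x i * Q i * ∏ j, S0 j := by ring
  rw [lhs_eq]
  rw [← Finset.sum_mul]
  have hQsum : ∑ i, x i * Q i
      = (∑ i, x i * (a i : ℚ)) - (∑ i, x i * (c i : ℚ)) + (∑ i, x i * (a i : ℚ) ^ 2)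
        + (∑ i, x i * (c i : ℚ) ^ 2) + 2 * (∑ i, x i * (a i : ℚ) * (c i : ℚ)) := by
    simp_rw [hQ]
    rw [Finset.mul_sum, ← Finset.sum_sub_distrib, ← Finset.sum_add_distrib,
      ← Finset.sum_add_distrib, ← Finset.sum_add_distrib]
    apply Finset.sum_congr rfl
    intro i _
    ring
  rw [hQsum]
  ring
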